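/- Let G be a connected bipartite simple graph with s ≥ 2 edges, and let f = t^a − t^b ∈ I(X) with a = (a_1,…,a_s), b = (b_1,…,b_s) ∈ ℕ^s such that supp(a) ∩ supp(b) = ∅ and a_j ≤ q−2 and b_j ≤ q−2 for all j. If the edge e_i does not belong to any cycle of G (equivalently, e_i is a bridge of G), then a_i = b_i = 0. -/

import Mathlib

open MvPolynomial

noncomputable section

/-- For `x : Fin n → M` and an edge `E = {j,k}` (as an element of `Sym2 (Fin n)`),
`edgeProd x E = x j * x k`. -/
def edgeProd {M : Type} [CommMonoid M] {n : ℕ} (x : Fin n → M) (E : Sym2 (Fin n)) : M :=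
  Sym2.lift ⟨fun a b => x a * x b, fun a b => mul_comm (x a) (x b)⟩ E

/-- The vanishing ideal `I(X) ⊆ K[t_1,…,t_s]` of the algebraic toric set parameterized by
the edges `e_1,…,e_s` of a graph. -/
def graphVanishingIdeal (K : Type) [Field K] {n s : ℕ} (e : Fin s → Sym2 (Fin n)) :
    Ideal (MvPolynomial (Fin s) K) :=
  Ideal.span {f | (∃ d, f.IsHomogeneous d) ∧
    ∀ x : Fin n → Kˣ, eval (fun i => ((edgeProd x (e i) : Kˣ) : K)) f = 0}

/-!
Write `e_i = {u, w}`. Put `x_v = μ` or `μ⁻¹` (according to the colour class of `v`) on the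
vertices `v` joined to `u` in `G - e_i`, and `x_v = 1` elsewhere. Since `e_i` is a bridge, `w`
gets `1`, so `x^{e_i} = μ`, while every other edge joins two differently coloured vertices of
the same component of `G - e_i`, so `x^{e_j} = 1`. Evaluating `t^a - t^b ∈ I(X)` at this point
gives `μ^{a_i} = μ^{b_i}` for every `μ ∈ K^*`; as `K^*` is cyclic of order `q - 1` and
`a_i, b_i ≤ q - 2`, this forces `a_i = b_i`, and disjointness of the supports gives `0`.
-/

@[simp]
lemma edgeProd_mk {M : Type} [CommMonoid M] {n : ℕ} (x : Fin n → M) (u w : Fin n) :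
    edgeProd x s(u, w) = x u * x w :=
  rfl

lemma eval_eq_zero_of_mem_graphVanishingIdeal {K : Type} [Field K] {n s : ℕ}
    {e : Fin s → Sym2 (Fin n)} {f : MvPolynomial (Fin s) K} (hf : f ∈ graphVanishingIdeal K e)
    (x : Fin n → Kˣ) : eval (fun i => ((edgeProd x (e i) : Kˣ) : K)) f = 0 := by
  have hle : graphVanishingIdeal K e ≤ RingHom.ker (eval fun i => ((edgeProd x (e i) : Kˣ) : K)) :=
    Ideal.span_le.mpr fun _ hg => hg.2 x
  exact hle hf

lemma MvPolynomial.eval_mulSingle_monomial_one {R σ : Type*} [CommSemiring R] [DecidableEq σ]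
    (i : σ) (z : R) (c : σ →₀ ℕ) : eval (Pi.mulSingle i z) (monomial c 1) = z ^ c i := by
  rw [eval_monomial, one_mul, Finsupp.prod, Finset.prod_eq_single i]
  · simp
  · intro j _ hji
    simp [Pi.mulSingle_eq_of_ne hji]
  · intro hi
    simp [Finsupp.notMem_support_iff.mp hi]

theorem IsCyclic.eq_of_forall_pow_eq {α : Type*} [Group α] [IsCyclic α] {m k : ℕ}
    (h : ∀ g : α, g ^ m = g ^ k) (hm : m < Nat.card α) (hk : k < Nat.card α) : m = k := by
  obtain ⟨g, hg⟩ := IsCyclic.exists_ofOrder_eq_natCard (α := α)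
  have hmod := pow_eq_pow_iff_modEq.mp (h g)
  rw [hg] at hmod
  exact hmod.eq_of_lt_of_lt hm hk

theorem SimpleGraph.IsBridge.exists_mul_eq {V M : Type*} [CommGroup M] {G : SimpleGraph V}
    (hbip : G.Colorable 2) {u w : V} (hbridge : G.IsBridge s(u, w)) (μ : M) :
    ∃ x : V → M, x u * x w = μ ∧ ∀ ⦃p r⦄, G.Adj p r → s(p, r) ≠ s(u, w) → x p * x r = 1 := by
  classical
  obtain ⟨C⟩ := hbip
  set H := G.deleteEdges {s(u, w)}
  refine ⟨fun v => if H.Reachable u v then (if C v = C u then μ else μ⁻¹) else 1, ?_, ?_⟩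
  · have hw : ¬ H.Reachable u w := hbridge
    simp [hw]
  · intro p r hpr hne
    have hH : H.Adj p r := by simp [H, hpr, hne]
    have hreach : H.Reachable u p ↔ H.Reachable u r :=
      ⟨fun h => h.trans hH.reachable, fun h => h.trans hH.symm.reachable⟩
    have hcol : C p = C u ↔ ¬ C r = C u := by
      have := C.valid hpr
      omega
    by_cases hp : H.Reachable u p
    · by_cases hc : C p = C u
      · simp [hp, hreach.mp hp, hc, hcol.mp hc]
      · simp [hp, hreach.mp hp, hc, not_not.mp (mt hcol.mpr hc)]
    · simp [hp, mt hreach.mpr hp]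

theorem exists_edgeProd_eq_mulSingle_of_isBridge {M : Type} [CommGroup M] {n s : ℕ}
    {e : Fin s → Sym2 (Fin n)} (he : Function.Injective e) (hnd : ∀ i, ¬ (e i).IsDiag)
    {G : SimpleGraph (Fin n)} (hG : G = SimpleGraph.fromEdgeSet (Set.range e))
    (hbip : G.Colorable 2) {i : Fin s} (hbridge : G.IsBridge (e i)) (μ : M) :
    ∃ x : Fin n → M, ∀ j, edgeProd x (e j) = (Pi.mulSingle i μ : Fin s → M) j := by
  obtain ⟨u, w, huw⟩ : ∃ u w, s(u, w) = e i := (e i).ind fun u w => ⟨u, w, rfl⟩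
  rw [← huw] at hbridge
  obtain ⟨x, hxi, hx⟩ := hbridge.exists_mul_eq hbip μ
  refine ⟨x, fun j => ?_⟩
  by_cases hji : j = i
  · subst hji
    simpa [← huw] using hxi
  obtain ⟨p, r, hpr⟩ : ∃ p r, s(p, r) = e j := (e j).ind fun p r => ⟨p, r, rfl⟩
  have hadj : G.Adj p r := by
    rw [hG, SimpleGraph.fromEdgeSet_adj]
    exact ⟨⟨j, hpr.symm⟩, fun h => hnd j (hpr ▸ Sym2.mk_isDiag_iff.mpr h)⟩
  have hne : s(p, r) ≠ s(u, w) := by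
    rw [hpr, huw]
    exact he.ne hji
  simpa [← hpr, Pi.mulSingle_eq_of_ne hji] using hx hadj hne

theorem bridge_variable_does_not_occur_general
    (q n s : ℕ) (K : Type) [Field K] [Fintype K]
    (hcard : Fintype.card K = q)
    (e : Fin s → Sym2 (Fin n)) (he : Function.Injective e)
    (hnd : ∀ i, ¬ (e i).IsDiag)
    (G : SimpleGraph (Fin n)) (hG : G = SimpleGraph.fromEdgeSet (Set.range e))
    (hbip : G.Colorable 2)
    (a b : Fin s →₀ ℕ)
    (hf : (monomial a 1 - monomial b 1 : MvPolynomial (Fin s) K) ∈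
      graphVanishingIdeal K e)
    (hdisj : Disjoint a.support b.support)
    (ha : ∀ j, a j ≤ q - 2) (hb : ∀ j, b j ≤ q - 2)
    (i : Fin s) (hbridge : G.IsBridge (e i)) :
    a i = 0 ∧ b i = 0 := by
  have hpow : ∀ μ : Kˣ, μ ^ a i = μ ^ b i := by
    intro μ
    obtain ⟨x, hx⟩ := exists_edgeProd_eq_mulSingle_of_isBridge he hnd hG hbip hbridge μ
    have hval := eval_eq_zero_of_mem_graphVanishingIdeal hf x
    have hpt : (fun j => ((Pi.mulSingle i μ : Fin s → Kˣ) j : K)) = Pi.mulSingle i (μ : K) :=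
      funext (Pi.apply_mulSingle (fun _ => Units.val) (fun _ => Units.val_one) i μ)
    simp only [hx, hpt] at hval
    rw [map_sub, eval_mulSingle_monomial_one, eval_mulSingle_monomial_one, sub_eq_zero] at hval
    exact_mod_cast hval
  have hcardUnits : Nat.card Kˣ = q - 1 := by
    rw [Nat.card_units, Nat.card_eq_fintype_card, hcard]
  have hq : 1 < q := hcard ▸ Fintype.one_lt_card
  have hab : a i = b i :=
    IsCyclic.eq_of_forall_pow_eq hpow (by have := ha i; omega) (by have := hb i; omega)
  have ha0 : a i = 0 := by
    by_contra h0
    exact Finset.disjoint_left.mp hdisj (Finsupp.mem_support_iff.mpr h0)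
      (Finsupp.mem_support_iff.mpr (hab ▸ h0))
  exact ⟨ha0, hab ▸ ha0⟩

/-- Let `G` be a connected bipartite simple graph with `s ≥ 2` edges and let
`f = t^a − t^b ∈ I(X)` with `supp(a) ∩ supp(b) = ∅` and all exponents `≤ q−2`.  If the
edge `e_i` lies on no cycle of `G` (equivalently, `e_i` is a bridge) then
`a_i = b_i = 0`. -/
theorem bridge_variable_does_not_occur
    (q n s : ℕ) (hq : 2 < q) (hs : 2 ≤ s) (K : Type) [Field K] [Fintype K]
    (hcard : Fintype.card K = q)
    (e : Fin s → Sym2 (Fin n)) (he : Function.Injective e)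
    (hnd : ∀ i, ¬ (e i).IsDiag)
    (hiso : ∀ v : Fin n, ∃ i, v ∈ e i)
    (G : SimpleGraph (Fin n)) (hG : G = SimpleGraph.fromEdgeSet (Set.range e))
    (hconn : G.Connected) (hbip : G.Colorable 2)
    (a b : Fin s →₀ ℕ)
    (hf : (monomial a 1 - monomial b 1 : MvPolynomial (Fin s) K) ∈
      graphVanishingIdeal K e)
    (hdisj : Disjoint a.support b.support)
    (ha : ∀ j, a j ≤ q - 2) (hb : ∀ j, b j ≤ q - 2)
    (i : Fin s) (hbridge : G.IsBridge (e i)) :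
    a i = 0 ∧ b i = 0 :=
  bridge_variable_does_not_occur_general q n s K hcard e he hnd G hG hbip a b hf hdisj ha hb i
    hbridge
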